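/- arXiv:2109.09462 — 3 statements merged into one kernel-verified Lean document; each statement's English description precedes it below -/
import Mathlib

section
/- Let p ≥ 1 and let P be a polynomial in p+1 variables u_1, …, u_{p+1} over a field of characteristic zero, whose degree in each variable u_i is at most p−1. If P vanishes identically on every hyperplane u_i = u_j + 1 with 1 ≤ i < j ≤ p+1, then P is the zero polynomial. -/
/-!
Regard `P` as a polynomial in `u₀` with coefficients in `K[u₁, …, u_p]`. Its degree is below
`p`, and vanishing on the hyperplane `u₀ = u_j + 1` says exactly that it has the root `u_j + 1`.
These `p` roots are distinct, so `P = 0`.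
-/

open MvPolynomial

namespace MvPolynomial

variable {R : Type*}

theorem rename_succ_eval_finSuccEquiv [CommSemiring R] {n : ℕ} (s : MvPolynomial (Fin n) R)
    (P : MvPolynomial (Fin (n + 1)) R) :
    rename Fin.succ ((finSuccEquiv R n P).eval s) =
      aeval (Function.update X 0 (rename Fin.succ s)) P := by
  induction P using MvPolynomial.induction_on with
  | C a => simp [finSuccEquiv_apply]
  | add P Q hP hQ => simp only [map_add, Polynomial.eval_add, hP, hQ]
  | mul_X P i hP =>
    cases i using Fin.cases <;> simp [hP, finSuccEquiv_X_zero, finSuccEquiv_X_succ]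

theorem eq_zero_of_degreeOf_lt_of_aeval_update_eq_zero [CommRing R] [IsDomain R] {n : ℕ}
    (P : MvPolynomial (Fin (n + 1)) R) (hdeg : P.degreeOf 0 < n)
    (hvan : ∀ j : Fin n,
      aeval (Function.update X 0 (X j.succ + 1 : MvPolynomial (Fin (n + 1)) R)) P = 0) :
    P = 0 := by
  have hroots_inj : Function.Injective fun j : Fin n => (X j + 1 : MvPolynomial (Fin n) R) :=
    (add_left_injective 1).comp X_injective
  apply (finSuccEquiv R n).injective
  rw [map_zero]
  refine Polynomial.eq_zero_of_natDegree_lt_card_of_eval_eq_zero _ hroots_inj (fun j => ?_)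
    (by simpa [natDegree_finSuccEquiv] using hdeg)
  apply rename_injective _ (Fin.succ_injective n)
  simpa [rename_succ_eval_finSuccEquiv] using hvan j

end MvPolynomial

theorem stmt_0_general {K : Type*} [Field K] (p : ℕ) (hp : 1 ≤ p)
    (P : MvPolynomial (Fin (p + 1)) K)
    (hdeg : ∀ i, P.degreeOf i ≤ p - 1)
    (hvan : ∀ i j : Fin (p + 1), i < j →
      (aeval (fun l => if l = i then X j + 1 else X l) P : MvPolynomial (Fin (p + 1)) K) = 0) :
    P = 0 := by
  refine eq_zero_of_degreeOf_lt_of_aeval_update_eq_zero P (by have := hdeg 0; omega) fun j => ?_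
  rw [← hvan 0 j.succ j.succ_pos]
  congr 2
  exact funext (Function.update_apply X 0 _)

/-- If a polynomial in `p+1` variables over a field of characteristic zero has degree at most
`p-1` in each variable and vanishes identically on each hyperplane `u_i = u_j + 1` (`i < j`),
then it is the zero polynomial. -/
theorem stmt_0 {K : Type*} [Field K] [CharZero K] (p : ℕ) (hp : 1 ≤ p)
    (P : MvPolynomial (Fin (p + 1)) K)
    (hdeg : ∀ i, P.degreeOf i ≤ p - 1)
    (hvan : ∀ i j : Fin (p + 1), i < j →
      (aeval (fun l => if l = i then X j + 1 else X l) P : MvPolynomial (Fin (p + 1)) K) = 0) :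
    P = 0 :=
  stmt_0_general p hp P hdeg hvan
end

section
/- Let A be an associative ℂ-algebra and a(u) = a_1 u^{p-1} + ⋯ + a_p ∈ A[u] a polynomial of degree ≤ p−1 satisfying (u−v+1)·a(u)·a(v) = −(u−v−1)·a(v)·a(u) as a polynomial identity. Then for any p+1 complex numbers u_1, …, u_{p+1}, the product a(u_1)·a(u_2)⋯a(u_{p+1}) equals 0. -/
open Polynomial

namespace Stmt2Aux

variable {A : Type*} [Ring A] [Algebra ℂ A]

/-- Evaluation of `a` at the (central) image of a complex scalar. -/
noncomputable def At (a : A[X]) (s : ℂ) : A := a.eval (algebraMap ℂ A s)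

/-- Evaluation at a central scalar, as a ring hom. -/
noncomputable def ev (s : ℂ) : A[X] →+* A :=
  eval₂RingHom' (RingHom.id A) (algebraMap ℂ A s)
    (fun r => (Algebra.commutes s r).symm)

lemma ev_apply (s : ℂ) (q : A[X]) : ev s q = q.eval (algebraMap ℂ A s) := rfl

@[simp] lemma ev_C (s : ℂ) (r : A) : ev s (C r) = r := eval₂_C _ _

@[simp] lemma ev_X (s : ℂ) : ev (A := A) s X = algebraMap ℂ A s := eval₂_X _ _

lemma ev_a (a : A[X]) (s : ℂ) : ev s a = At a s := rfl

/-- For a linear functional `φ`, the commutative shadow of `Q`. -/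
lemma dual_poly (Q : A[X]) (φ : Module.Dual ℂ A) :
    ∃ q : ℂ[X], q.natDegree ≤ Q.natDegree ∧
      (∀ s : ℂ, q.eval s = φ (Q.eval (algebraMap ℂ A s))) ∧
      (∀ k, q.coeff k = φ (Q.coeff k)) := by
  classical
  set n := Q.natDegree with hn
  set q : ℂ[X] := ∑ j ∈ Finset.range (n + 1), C (φ (Q.coeff j)) * X ^ j with hq
  have hcoeff : ∀ k, q.coeff k = φ (Q.coeff k) := by
    intro k
    rw [hq, finset_sum_coeff]
    simp only [coeff_C_mul, coeff_X_pow, mul_ite, mul_one, mul_zero]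
    rw [Finset.sum_ite_eq (Finset.range (n + 1)) k (fun j => φ (Q.coeff j))]
    split_ifs with h
    · rfl
    · rw [Finset.mem_range, not_lt] at h
      rw [Q.coeff_eq_zero_of_natDegree_lt (by omega), map_zero]
  refine ⟨q, ?_, ?_, hcoeff⟩
  · refine natDegree_le_iff_coeff_eq_zero.mpr fun N hN => ?_
    rw [hcoeff N, Q.coeff_eq_zero_of_natDegree_lt hN, map_zero]
  · intro s
    rw [Q.eval_eq_sum_range, map_sum, hq, eval_finset_sum]
    refine Finset.sum_congr rfl fun j _ => ?_
    rw [eval_mul, eval_C, eval_pow, eval_X, ← map_pow, ← Algebra.commutes,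
      ← Algebra.smul_def, map_smul, smul_eq_mul]
    exact mul_comm _ _

/-- A polynomial over `A` of small degree vanishing at enough complex points is zero. -/
lemma poly_zero_of_roots (Q : A[X]) (S : Finset ℂ) (hcard : Q.natDegree < S.card)
    (hroot : ∀ s ∈ S, Q.eval (algebraMap ℂ A s) = 0) : Q = 0 := by
  ext k
  rw [coeff_zero, ← Module.forall_dual_apply_eq_zero_iff ℂ (Q.coeff k)]
  intro φ
  obtain ⟨q, hqdeg, hqev, hqcoeff⟩ := dual_poly Q φ
  have hq0 : q = 0 := by
    refine eq_zero_of_natDegree_lt_card_of_eval_eq_zero' q S (fun s hs => ?_)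
      (lt_of_le_of_lt hqdeg hcard)
    rw [hqev s, hroot s hs, map_zero]
  rw [← hqcoeff k, hq0, coeff_zero]

/-- A polynomial over `A` vanishing on an infinite set of complex points is zero. -/
lemma poly_zero_of_infinite (Q : A[X]) (S : Set ℂ) (hS : S.Infinite)
    (hroot : ∀ s ∈ S, Q.eval (algebraMap ℂ A s) = 0) : Q = 0 := by
  ext k
  rw [coeff_zero, ← Module.forall_dual_apply_eq_zero_iff ℂ (Q.coeff k)]
  intro φ
  obtain ⟨q, hqdeg, hqev, hqcoeff⟩ := dual_poly Q φ
  have hq0 : q = 0 := by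
    refine Polynomial.eq_zero_of_infinite_isRoot q (hS.mono fun s hs => ?_)
    rw [Set.mem_setOf_eq, IsRoot.def, hqev s, hroot s hs, map_zero]
  rw [← hqcoeff k, hq0, coeff_zero]

/-- The scalar form of the exchange relation. -/
lemma scalar_rel (a : A[X])
    (hrel : (C (X : A[X]) - X + 1) * C a * a.map (C : A →+* A[X])
      = -((C (X : A[X]) - X - 1) * a.map (C : A →+* A[X]) * C a)) (s t : ℂ) :
    algebraMap ℂ A (s - t + 1) * At a s * At a t
      = -(algebraMap ℂ A (s - t - 1) * At a t * At a s) := by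
  have h1 := congrArg (Polynomial.mapRingHom (ev (A := A) s)) hrel
  have hcomp : (ev (A := A) s).comp (C : A →+* A[X]) = RingHom.id A :=
    RingHom.ext fun r => eval₂_C _ _
  simp only [map_mul, map_sub, map_add, map_one, map_neg, coe_mapRingHom,
    Polynomial.map_C, Polynomial.map_X, Polynomial.map_map, hcomp, Polynomial.map_id] at h1
  have h2 := congrArg (ev (A := A) t) h1
  simp only [map_mul, map_sub, map_add, map_one, map_neg, ev_C, ev_X] at h2
  simp only [map_add, map_sub, map_one]
  exact h2

/-- The key nilpotency: `a(t+1) a(t) = 0`. -/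
lemma nil_step (a : A[X])
    (hrel : (C (X : A[X]) - X + 1) * C a * a.map (C : A →+* A[X])
      = -((C (X : A[X]) - X - 1) * a.map (C : A →+* A[X]) * C a)) (t : ℂ) :
    At a (t + 1) * At a t = 0 := by
  have h := scalar_rel a hrel (t + 1) t
  have e1 : t + 1 - t + 1 = (2 : ℂ) := by ring
  have e2 : t + 1 - t - 1 = (0 : ℂ) := by ring
  rw [e1, e2, map_zero, zero_mul, zero_mul, neg_zero] at h
  have h' : (2 : ℂ) • (At a (t + 1) * At a t) = 0 := by
    rw [Algebra.smul_def, ← mul_assoc, h]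
  calc At a (t + 1) * At a t
      = (2 : ℂ)⁻¹ • ((2 : ℂ) • (At a (t + 1) * At a t)) := by
        rw [inv_smul_smul₀ two_ne_zero]
    _ = 0 := by rw [h', smul_zero]

/-- Exchange of two factors up to a scalar. -/
lemma swap_step (a : A[X])
    (hrel : (C (X : A[X]) - X + 1) * C a * a.map (C : A →+* A[X])
      = -((C (X : A[X]) - X - 1) * a.map (C : A →+* A[X]) * C a))
    (s t : ℂ) (h : s - t + 1 ≠ 0) :
    ∃ g : ℂ, At a s * At a t = g • (At a t * At a s) := by
  have hrel' := scalar_rel a hrel s t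
  have h1 : (s - t + 1) • (At a s * At a t) = (-(s - t - 1)) • (At a t * At a s) := by
    rw [Algebra.smul_def, ← mul_assoc, hrel', Algebra.smul_def, map_neg, neg_mul, mul_assoc]
  refine ⟨(s - t + 1)⁻¹ * (-(s - t - 1)), ?_⟩
  calc At a s * At a t
      = (s - t + 1)⁻¹ • ((s - t + 1) • (At a s * At a t)) := by rw [inv_smul_smul₀ h]
    _ = (s - t + 1)⁻¹ • ((-(s - t - 1)) • (At a t * At a s)) := by rw [h1]
    _ = ((s - t + 1)⁻¹ * (-(s - t - 1))) • (At a t * At a s) := by rw [smul_smul]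

/-- Push a factor through a list of factors, up to a scalar. -/
lemma push (a : A[X])
    (hrel : (C (X : A[X]) - X + 1) * C a * a.map (C : A →+* A[X])
      = -((C (X : A[X]) - X - 1) * a.map (C : A →+* A[X]) * C a))
    (s : ℂ) : ∀ (m : List ℂ), (∀ t ∈ m, s - t + 1 ≠ 0) →
      ∃ g : ℂ, At a s * (m.map (At a)).prod = g • ((m.map (At a)).prod * At a s) := by
  intro m
  induction m with
  | nil => exact fun _ => ⟨1, by simp⟩
  | cons t m' ih =>
    intro h
    obtain ⟨g₁, hg₁⟩ := swap_step a hrel s t (h t (by simp))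
    obtain ⟨g₂, hg₂⟩ := ih (fun y hy => h y (by simp [hy]))
    refine ⟨g₁ * g₂, ?_⟩
    simp only [List.map_cons, List.prod_cons]
    rw [← mul_assoc, hg₁, smul_mul_assoc, mul_assoc, hg₂, mul_smul_comm, smul_smul,
      ← mul_assoc]

/-- Core step: with a generic tail of length `p`, the product vanishes for every head. -/
lemma core (a : A[X])
    (hrel : (C (X : A[X]) - X + 1) * C a * a.map (C : A →+* A[X])
      = -((C (X : A[X]) - X - 1) * a.map (C : A →+* A[X]) * C a))
    (p : ℕ) (hp : 1 ≤ p) (hdeg : a.natDegree ≤ p - 1)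
    (s : ℂ) (m : List ℂ) (hlen : m.length = p)
    (hgen : m.Pairwise fun x y => x ≠ y ∧ x - y ≠ 2) :
    At a s * (m.map (At a)).prod = 0 := by
  have key : ∀ y ∈ m, At a (y + 1) * (m.map (At a)).prod = 0 := by
    intro y hy
    obtain ⟨m₁, m₂, hm⟩ := List.append_of_mem hy
    subst hm
    have hcond : ∀ t ∈ m₁, (y + 1) - t + 1 ≠ 0 := by
      intro t ht h0
      have hR := (List.pairwise_append.mp hgen).2.2 t ht y (by simp)
      exact hR.2 (by linear_combination -h0)
    obtain ⟨g, hg⟩ := push a hrel (y + 1) m₁ hcond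
    rw [List.map_append, List.prod_append, List.map_cons, List.prod_cons]
    rw [← mul_assoc, hg, smul_mul_assoc, mul_assoc, ← mul_assoc (At a (y + 1)),
      nil_step a hrel y, zero_mul, mul_zero, smul_zero]
  set Q : A[X] := a * C ((m.map (At a)).prod) with hQdef
  have hev : ∀ s' : ℂ, Q.eval (algebraMap ℂ A s') = At a s' * (m.map (At a)).prod := by
    intro s'
    rw [← ev_apply, hQdef, map_mul, ev_C, ev_a]
  have hQ0 : Q = 0 := by
    refine poly_zero_of_roots Q ((m.map (· + 1)).toFinset) ?_ ?_
    · have hnd : m.Nodup := hgen.imp fun h => h.1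
      have hnd' : (m.map (· + 1)).Nodup := hnd.map (fun x y h => by linear_combination h)
      have hdQ : Q.natDegree ≤ p - 1 :=
        le_trans natDegree_mul_le (by simpa [natDegree_C] using hdeg)
      rw [List.toFinset_card_of_nodup hnd', List.length_map, hlen]
      omega
    · intro s' hs'
      rw [List.mem_toFinset, List.mem_map] at hs'
      obtain ⟨y, hy, rfl⟩ := hs'
      rw [hev]
      exact key y hy
  have := hev s
  rw [hQ0, eval_zero] at this
  exact this.symm

/-- Remove genericity coordinate by coordinate. -/
lemma degen (a : A[X])
    (hrel : (C (X : A[X]) - X + 1) * C a * a.map (C : A →+* A[X])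
      = -((C (X : A[X]) - X - 1) * a.map (C : A →+* A[X]) * C a))
    (p : ℕ) (hp : 1 ≤ p) (hdeg : a.natDegree ≤ p - 1) :
    ∀ (n : ℕ) (l m : List ℂ), l.length = n → l.length + m.length = p + 1 →
      m.Pairwise (fun x y => x ≠ y ∧ x - y ≠ 2) →
      ((l ++ m).map (At a)).prod = 0 := by
  intro n
  induction n with
  | zero =>
    intro l m hl hlen hgen
    rw [List.length_eq_zero_iff] at hl
    subst hl
    rw [List.length_nil, zero_add] at hlen
    match m, hlen, hgen with
    | y :: m', hlen, hgen =>
      rw [List.nil_append, List.map_cons, List.prod_cons]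
      refine core a hrel p hp hdeg y m' ?_ ((List.pairwise_cons.mp hgen).2)
      simpa using hlen
  | succ n ih =>
    intro l m hl hlen hgen
    rcases List.eq_nil_or_concat l with rfl | ⟨l', x, rfl⟩
    · simp at hl
    · rw [List.concat_eq_append] at *
      have hl' : l'.length = n := by simpa using hl
      set P₁ := (l'.map (At a)).prod with hP₁
      set P₂ := (m.map (At a)).prod with hP₂
      set Q : A[X] := C P₁ * a * C P₂ with hQdef
      have hev : ∀ s : ℂ, Q.eval (algebraMap ℂ A s) = P₁ * At a s * P₂ := by
        intro s
        rw [← ev_apply, hQdef, map_mul, map_mul, ev_C, ev_C, ev_a]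
      have hQ0 : Q = 0 := by
        refine poly_zero_of_infinite Q
          ((↑(m.toFinset ∪ (m.map (· + 2)).toFinset) : Set ℂ)ᶜ)
          (Set.Finite.infinite_compl (Finset.finite_toSet _)) ?_
        intro s hs
        rw [Set.mem_compl_iff, Finset.mem_coe, Finset.mem_union, not_or,
          List.mem_toFinset, List.mem_toFinset] at hs
        have hgen' : (s :: m).Pairwise (fun x y => x ≠ y ∧ x - y ≠ 2) := by
          rw [List.pairwise_cons]
          refine ⟨fun y hy => ⟨?_, ?_⟩, hgen⟩
          · rintro rfl; exact hs.1 hy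
          · intro h2
            exact hs.2 (List.mem_map.mpr ⟨y, hy, by linear_combination -h2⟩)
        have hprod := ih l' (s :: m) hl' (by simp at hlen ⊢; omega) hgen'
        rw [List.map_append, List.prod_append, List.map_cons, List.prod_cons] at hprod
        rw [hev, mul_assoc]
        exact hprod
      have hx := hev x
      rw [hQ0, eval_zero] at hx
      rw [List.append_assoc, List.map_append, List.prod_append, List.singleton_append,
        List.map_cons, List.prod_cons, ← mul_assoc]
      exact hx.symm

end Stmt2Aux

open Stmt2Aux in
/-- If `a(u) = a₁ u^(p-1) + ⋯ + a_p ∈ A[u]` (for an associative ℂ-algebra `A`) satisfies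
`(u - v + 1) a(u) a(v) = -(u - v - 1) a(v) a(u)` in `A[u,v]` (modelled as `(A[u])[v]` with
`u = C X`, `v = X`), then for any `p+1` complex numbers `u₁, …, u_{p+1}` the product
`a(u₁) a(u₂) ⋯ a(u_{p+1})` vanishes. -/
theorem stmt_2 {A : Type*} [Ring A] [Algebra ℂ A] (p : ℕ) (hp : 1 ≤ p) (a : A[X])
    (hdeg : a.natDegree ≤ p - 1)
    (hrel : (C (X : A[X]) - X + 1) * C a * a.map (C : A →+* A[X])
      = -((C (X : A[X]) - X - 1) * a.map (C : A →+* A[X]) * C a)) :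
    ∀ c : Fin (p + 1) → ℂ,
      (List.ofFn fun i => a.eval (algebraMap ℂ A (c i))).prod = 0 := by
  intro c
  have h := degen a hrel p hp hdeg (p + 1) (List.ofFn c) [] List.length_ofFn
    (by simp) List.Pairwise.nil
  rw [List.append_nil] at h
  have hmap : (List.ofFn c).map (At a) = List.ofFn fun i => a.eval (algebraMap ℂ A (c i)) := by
    rw [List.map_ofFn]; rfl
  rw [hmap] at h
  exact h
end

section
/- Let g = gl_{m|n} with standard basis elements E_{ij} of parity p_i + p_j mod 2 satisfying [E_{ij}, E_{kl}] = δ_{kj} E_{il} − δ_{il} E_{kj} (−1)^{(p_i+p_j)(p_k+p_l)} (super bracket). Then in U(gl_{m|n})[[u^{-1}]], the series t_{ij}(u) := δ_{ij} + E_{ij}(−1)^{p_i} u^{-1} satisfy the super Yangian defining relations [t_{ij}(u), t_{kl}(v)] = (u−v)^{-1}(t_{kj}(u) t_{il}(v) − t_{kj}(v) t_{il}(u))·(−1)^{p_i p_j + p_i p_k + p_j p_k}, where [·,·] is the super-commutator in U(gl_{m|n})[[u^{-1},v^{-1}]]. -/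
open Polynomial

/-!
If `δ_{ij} ≠ 0` then `p_i + p_j` is even, so the constant terms drop out of the super-commutator
`[t_{ij}(u), t_{kl}(v)]`, which becomes `(-1)^{p_i + p_k} [E_{ij}, E_{kl}] u⁻¹ v⁻¹`. On the other
side, `t_{kj}(u) t_{il}(v) - t_{kj}(v) t_{il}(u)` is `v⁻¹ - u⁻¹` times a combination of `E_{il}`
and `E_{kj}`. What remains is the `gl_{m|n}` bracket together with two parity identities, which
hold for arbitrary exponents because `q² ≡ q (mod 2)`.
-/

/-- The evaluation series `t_{ij}(u) = δ_{ij} + E_{ij} (-1)^{p_i} u⁻¹`, written as a polynomial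
in the variable `x = u⁻¹` with coefficients in `A`. -/
noncomputable def evalSeries {A : Type*} [Ring A] (N : ℕ) (p : Fin N → ℕ)
    (E : Fin N → Fin N → A) (i j : Fin N) : A[X] :=
  C (if i = j then (1 : A) else 0) + C ((-1 : A) ^ p i * E i j) * X

theorem Polynomial.commute_C_of_forall_commute {R : Type*} [Ring R] {a : R}
    (ha : ∀ r, Commute a r) (q : R[X]) : Commute (C a) q := by
  ext n
  simp [coeff_C_mul, coeff_mul_C, (ha _).eq]

theorem neg_one_pow_eq_neg_one_pow_of_even_iff {R : Type*} [Ring R] {m n : ℕ}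
    (h : Even m ↔ Even n) : (-1 : R) ^ m = (-1 : R) ^ n := by
  simp only [neg_one_pow_eq_ite, h]

theorem commute_neg_one_pow {R : Type*} [Ring R] (n : ℕ) (r : R) : Commute ((-1 : R) ^ n) r :=
  (Commute.neg_one_left r).pow_left n

theorem signed_superCommutator_eq {ι A : Type*} [DecidableEq ι] [Ring A] (p : ι → ℕ)
    (E : ι → ι → A)
    (hE : ∀ i j k l : ι,
      E i j * E k l - (-1 : A) ^ ((p i + p j) * (p k + p l)) * (E k l * E i j)
        = (if k = j then E i l else 0)
          - (-1 : A) ^ ((p i + p j) * (p k + p l)) * (if i = l then E k j else 0))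
    (i j k l : ι) :
    ((-1 : A) ^ p i * E i j) * ((-1 : A) ^ p k * E k l)
        - (-1 : A) ^ ((p i + p j) * (p k + p l)) *
          (((-1 : A) ^ p k * E k l) * ((-1 : A) ^ p i * E i j))
      = ((if k = j then (1 : A) else 0) * ((-1 : A) ^ p i * E i l)
          - ((-1 : A) ^ p k * E k j) * (if i = l then (1 : A) else 0))
          * (-1 : A) ^ (p i * p j + p i * p k + p j * p k) := by
  set ε : A := (-1) ^ ((p i + p j) * (p k + p l))
  set σ : A := (-1) ^ (p i * p j + p i * p k + p j * p k)
  set s : A := (-1) ^ p i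
  set t : A := (-1) ^ p k
  have hs : ∀ r, Commute s r := commute_neg_one_pow _
  have ht : ∀ r, Commute t r := commute_neg_one_pow _
  have hε : ∀ r, Commute ε r := commute_neg_one_pow _
  have hσ : ∀ r, Commute σ r := commute_neg_one_pow _
  have hδkj : k = j → s * t * E i l = s * E i l * σ := by
    rintro rfl
    have : t = σ := neg_one_pow_eq_neg_one_pow_of_even_iff (by
      simp only [Nat.even_add, Nat.even_mul]; tauto)
    rw [this, mul_assoc, (hσ _).eq, mul_assoc]
  have hδil : i = l → s * t * (ε * E k j) = t * E k j * σ := by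
    rintro rfl
    have : s * ε = σ := by
      rw [← pow_add]
      exact neg_one_pow_eq_neg_one_pow_of_even_iff (by
        simp only [Nat.even_add, Nat.even_mul]; tauto)
    rw [(hs t).eq, mul_assoc, ← mul_assoc s, this, (hσ _).eq, mul_assoc]
  calc s * E i j * (t * E k l) - ε * (t * E k l * (s * E i j))
      = s * t * (E i j * E k l - ε * (E k l * E i j)) := by
        rw [((ht _).symm).mul_mul_mul_comm, ((hs _).symm).mul_mul_mul_comm, (ht s).eq,
          (hε _).left_comm, mul_sub]
    _ = s * t * ((if k = j then E i l else 0) - ε * (if i = l then E k j else 0)) := by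
        rw [hE]
    _ = _ := by
        split_ifs with hkj hil hil
        · rw [mul_sub, hδkj hkj, hδil hil, one_mul, mul_one, sub_mul]
        · rw [mul_zero, mul_zero, sub_zero, sub_zero, one_mul, hδkj hkj]
        · rw [zero_mul, zero_sub, zero_sub, mul_neg, mul_one, hδil hil, neg_mul]
        · simp

section CentralVariables

variable {R : Type*} [Ring R] {x y : R}

theorem superCommutator_linear_eq (hx : ∀ r, Commute x r) (hy : ∀ r, Commute y r)
    {a b c d e : R} (ha : ∀ r, Commute a r) (hc : ∀ r, Commute c r)
    (hea : e * a = a) (hec : e * c = c) :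
    (a + b * x) * (c + d * y) - e * ((c + d * y) * (a + b * x))
      = (b * d - e * (d * b)) * (x * y) := by
  have hca : e * (c * a) = a * c := by rw [← mul_assoc, hec, (hc a).eq]
  have hcb : e * (c * (b * x)) = b * x * c := by rw [← mul_assoc, hec, (hc _).eq]
  have hda : e * (d * y * a) = a * (d * y) := by rw [← (ha _).eq, ← mul_assoc, hea]
  have hxy : b * x * (d * y) = b * d * (x * y) := by
    rw [mul_assoc, ← mul_assoc x, (hx d).eq, mul_assoc, mul_assoc]
  have hyx : d * y * (b * x) = d * b * (x * y) := by
    rw [mul_assoc, ← mul_assoc y, (hy b).eq, mul_assoc, mul_assoc, (hy x).eq]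
  simp only [mul_add, add_mul, sub_mul, hca, hcb, hda, hxy, hyx]
  noncomm_ring

theorem linear_mul_linear_sub_swap (hx : ∀ r, Commute x r) (hy : ∀ r, Commute y r)
    (a b c d : R) :
    (a + b * x) * (c + d * y) - (a + b * y) * (c + d * x) = (a * d - b * c) * (y - x) := by
  have hxc : b * x * c = b * c * x := by rw [mul_assoc, (hx c).eq, mul_assoc]
  have hyc : b * y * c = b * c * y := by rw [mul_assoc, (hy c).eq, mul_assoc]
  have hxy : b * x * (d * y) = b * d * (x * y) := by
    rw [mul_assoc, ← mul_assoc x, (hx d).eq, mul_assoc, mul_assoc]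
  have hyx : b * y * (d * x) = b * d * (x * y) := by
    rw [mul_assoc, ← mul_assoc y, (hy d).eq, mul_assoc, mul_assoc, (hy x).eq]
  simp only [mul_add, add_mul, mul_sub, sub_mul, hxc, hyc, hxy, hyx]
  noncomm_ring

theorem yangian_relation_of_superCommutator (hx : ∀ r, Commute x r) (hy : ∀ r, Commute y r)
    {a b c d e a' b' c' d' σ : R} (ha : ∀ r, Commute a r) (hc : ∀ r, Commute c r)
    (hσ : ∀ r, Commute σ r) (hea : e * a = a) (hec : e * c = c)
    (h : b * d - e * (d * b) = (a' * d' - b' * c') * σ) :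
    (y - x) * ((a + b * x) * (c + d * y) - e * ((c + d * y) * (a + b * x)))
      = x * y * ((a' + b' * x) * (c' + d' * y) - (a' + b' * y) * (c' + d' * x)) * σ := by
  have hxy : ∀ r, Commute (x * y) r := fun r => (hx r).mul_left (hy r)
  have hyx : ∀ r, Commute (y - x) r := fun r => (hy r).sub_left (hx r)
  rw [superCommutator_linear_eq hx hy ha hc hea hec, h, linear_mul_linear_sub_swap hx hy]
  generalize x * y = u at hxy ⊢
  generalize y - x = v at hyx ⊢
  rw [(hyx _).eq, (hxy _).eq]
  simp only [mul_assoc]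
  rw [(hσ (u * v)).eq, (hyx (u * σ)).eq, mul_assoc, mul_assoc, (hσ v).eq]

end CentralVariables

/-- The relation lives in `A[x, y] = (A[x])[y]` with `x = u⁻¹ = C X` and `y = v⁻¹ = X`; it has
been multiplied by `u⁻¹ v⁻¹` after clearing `u - v`, so that `u - v` becomes `y - x`. -/
theorem stmt_14_general {A : Type*} [Ring A] (N : ℕ) (p : Fin N → ℕ)
    (E : Fin N → Fin N → A)
    (hE : ∀ i j k l : Fin N,
      E i j * E k l - (-1 : A) ^ ((p i + p j) * (p k + p l)) * (E k l * E i j)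
        = (if k = j then E i l else 0)
          - (-1 : A) ^ ((p i + p j) * (p k + p l)) * (if i = l then E k j else 0)) :
    ∀ i j k l : Fin N,
      (X - C (X : A[X])) *
        (C (evalSeries N p E i j) * (evalSeries N p E k l).map (C : A →+* A[X])
          - (-1 : (A[X])[X]) ^ ((p i + p j) * (p k + p l)) *
              ((evalSeries N p E k l).map (C : A →+* A[X]) * C (evalSeries N p E i j)))
      = C (X : A[X]) * X *
          (C (evalSeries N p E k j) * (evalSeries N p E i l).map (C : A →+* A[X])
            - (evalSeries N p E k j).map (C : A →+* A[X]) * C (evalSeries N p E i l)) *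
          (-1 : (A[X])[X]) ^ (p i * p j + p i * p k + p j * p k) := by
  intro i j k l
  have hδ_central : ∀ a b : Fin N, ∀ r,
      Commute (C (C (if a = b then (1 : A) else 0)) : (A[X])[X]) r :=
    fun a b => commute_C_of_forall_commute (commute_C_of_forall_commute fun r => by
      split_ifs
      exacts [Commute.one_left r, Commute.zero_left r])
  have hδ_sign : ∀ a b : Fin N, ∀ n : ℕ, (a = b → Even n) →
      (-1 : (A[X])[X]) ^ n * C (C (if a = b then (1 : A) else 0))
        = C (C (if a = b then (1 : A) else 0)) := by
    intro a b n hn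
    split_ifs with hab
    · rw [(hn hab).neg_one_pow (α := (A[X])[X]), one_mul]
    · rw [map_zero, map_zero, mul_zero]
  simp only [evalSeries, Polynomial.map_add, Polynomial.map_mul, Polynomial.map_C,
    Polynomial.map_X, C_add, C_mul]
  refine yangian_relation_of_superCommutator (commute_C_of_forall_commute commute_X)
    commute_X (hδ_central i j) (hδ_central k l) (commute_neg_one_pow _)
    (hδ_sign i j _ fun h => by subst h; exact Even.mul_right ⟨_, rfl⟩ _)
    (hδ_sign k l _ fun h => by subst h; exact Even.mul_left ⟨_, rfl⟩ _) ?_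
  simpa only [map_sub, map_mul, map_pow, map_neg, map_one] using
    congrArg (fun z => (C (C z) : (A[X])[X])) (signed_superCommutator_eq p E hE i j k l)

/-- If the elements `E_{ij}` satisfy the `gl_{m|n}` super-commutation relations
`[E_{ij}, E_{kl}] = δ_{kj} E_{il} - δ_{il} E_{kj} (-1)^{(p_i+p_j)(p_k+p_l)}`, then the series
`t_{ij}(u) = δ_{ij} + E_{ij} (-1)^{p_i} u⁻¹` satisfy the super Yangian defining relations.
The latter are written, after clearing the denominator `(u-v)` and multiplying by
`u⁻¹ v⁻¹`, as identities in `A[x, y] = (A[x])[y]` with `x = u⁻¹ = C X` and `y = v⁻¹ = X`,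
so that `u - v = (y - x)/(x y)`. -/
theorem stmt_14 {A : Type*} [Ring A] [Algebra ℂ A] (N : ℕ) (p : Fin N → ℕ)
    (hp : ∀ i, p i ≤ 1) (E : Fin N → Fin N → A)
    (hE : ∀ i j k l : Fin N,
      E i j * E k l - (-1 : A) ^ ((p i + p j) * (p k + p l)) * (E k l * E i j)
        = (if k = j then E i l else 0)
          - (-1 : A) ^ ((p i + p j) * (p k + p l)) * (if i = l then E k j else 0)) :
    ∀ i j k l : Fin N,
      (X - C (X : A[X])) *
        (C (evalSeries N p E i j) * (evalSeries N p E k l).map (C : A →+* A[X])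
          - (-1 : (A[X])[X]) ^ ((p i + p j) * (p k + p l)) *
              ((evalSeries N p E k l).map (C : A →+* A[X]) * C (evalSeries N p E i j)))
      = C (X : A[X]) * X *
          (C (evalSeries N p E k j) * (evalSeries N p E i l).map (C : A →+* A[X])
            - (evalSeries N p E k j).map (C : A →+* A[X]) * C (evalSeries N p E i l)) *
          (-1 : (A[X])[X]) ^ (p i * p j + p i * p k + p j * p k) :=
  stmt_14_general N p E hE
end
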